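/- Let g(x) = -(2/3)x + Ω(1/x, 0) + Ω(1/x, 1/(2x)) for x > 0, where Ω(x,y) = ∑_{n∈ℤ} max(0, 1 - |n·x - y|)². Then g achieves a unique global minimum at x = Λ, the unique root of 2X³ - 6X + 3 in (1/2, 1), and the minimum value g(Λ) is a root of the polynomial 6X³ - 42X² + 54X - 19. -/

import Mathlib

/-- `Ω(x,y) = ∑_{n∈ℤ} max(0, 1 - |n·x - y|)²`. -/
noncomputable def Omega (x y : ℝ) : ℝ := ∑' n : ℤ, (max 0 (1 - |(n : ℝ) * x - y|)) ^ 2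

/-- `g(x) = -(2/3)x + Ω(1/x, 0) + Ω(1/x, 1/(2x))` for `x > 0`. -/
noncomputable def g (x : ℝ) : ℝ :=
  -(2 / 3) * x + Omega (1 / x) 0 + Omega (1 / x) (1 / (2 * x))

/-!
Splitting `ℤ` into even and odd integers gives `Ω(1/x, 0) + Ω(1/x, 1/(2x)) = Ω(1/(2x), 0)`,
so `g x = 1 - 2x/3 + 2 ∑_{k ≥ 1} max(0, 1 - k/(2x))²`. With `N = ⌊2x⌋` the sum has `N` nonzero
terms, which makes `g` an explicit rational function on each interval `[N/2, (N+1)/2]`: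
`g x = 1 - 2x/3 ≥ 2/3` on `(0, 1/2]`, `g x = 3 - 2x/3 - 2/x + 1/(2x²)` on `[1/2, 1]`, and
`g x > 2/3` for `x > 1`. On `[1/2, 1]` the critical point equation is `2x³ - 6x + 3 = 0`, and
`g x - g Λ = (x - Λ)² (3 - 4Λ²x) / (6x²Λ²) > 0`. Finally `g Λ = (6Λ² - 8Λ + 3)/(2Λ²)`, and
eliminating `Λ` gives the cubic satisfied by `g Λ`.
-/

open Filter Finset

noncomputable def hatSq (u : ℝ) : ℝ := max 0 (1 - |u|) ^ 2

lemma hatSq_neg (u : ℝ) : hatSq (-u) = hatSq u := by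
  rw [hatSq, hatSq, abs_neg]

lemma hatSq_eq_zero {u : ℝ} (h : 1 ≤ |u|) : hatSq u = 0 := by
  rw [hatSq, max_eq_left (by linarith)]
  norm_num

lemma hatSq_of_nonneg_of_le_one {u : ℝ} (h0 : 0 ≤ u) (h1 : u ≤ 1) : hatSq u = (1 - u) ^ 2 := by
  rw [hatSq, abs_of_nonneg h0, max_eq_right (by linarith)]

lemma summable_hatSq_mul_sub {x : ℝ} (hx : x ≠ 0) (y : ℝ) :
    Summable fun n : ℤ => hatSq (n * x - y) := by
  have hnorm : Tendsto (fun n : ℤ => |(n : ℝ)| * |x| - |y|) cofinite atTop :=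
    tendsto_atTop_add_const_right _ _
      ((tendsto_norm_cocompact_atTop.comp Int.tendsto_coe_cofinite).atTop_mul_const
        (abs_pos.2 hx))
  have hlarge : Tendsto (fun n : ℤ => |n * x - y|) cofinite atTop :=
    tendsto_atTop_mono (fun n => by
      rw [← abs_mul]; linarith [abs_sub_abs_le_abs_sub ((n : ℝ) * x) y]) hnorm
  apply summable_of_hasFiniteSupport
  refine (Filter.eventually_cofinite.1 (hlarge.eventually_ge_atTop 1)).subset fun n hn => ?_
  exact fun h => hn (hatSq_eq_zero h)

lemma Omega_eq_tsum_hatSq (x y : ℝ) : Omega x y = ∑' n : ℤ, hatSq (n * x - y) := rfl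

theorem HasSum.int_even_add_odd {M : Type*} [AddCommMonoid M] [TopologicalSpace M]
    [ContinuousAdd M] {f : ℤ → M} {a b : M} (he : HasSum (fun n => f (2 * n)) a)
    (ho : HasSum (fun n => f (2 * n - 1)) b) : HasSum f (a + b) := by
  have hcompl : IsCompl (Set.range fun n : ℤ => 2 * n) (Set.range fun n : ℤ => 2 * n - 1) := by
    constructor
    · rw [Set.disjoint_iff]
      rintro _ ⟨⟨i, rfl⟩, ⟨j, hj⟩⟩
      simp only at hj
      omega
    · rw [codisjoint_iff_le_sup]
      intro m _
      rcases Int.even_or_odd' m with ⟨k, rfl | rfl⟩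
      · exact Or.inl ⟨k, rfl⟩
      · exact Or.inr ⟨k + 1, by ring⟩
  exact ((mul_right_injective₀ two_ne_zero).hasSum_range_iff.2 he).add_isCompl hcompl
    ((sub_left_injective.comp (mul_right_injective₀ two_ne_zero)).hasSum_range_iff.2 ho)

lemma Omega_two_mul_zero_add_Omega_two_mul {s : ℝ} (hs : s ≠ 0) :
    Omega (2 * s) 0 + Omega (2 * s) s = Omega s 0 := by
  have h2s : 2 * s ≠ 0 := mul_ne_zero two_ne_zero hs
  refine (HasSum.int_even_add_odd (f := fun m : ℤ => hatSq (m * s - 0)) ?_ ?_).tsum_eq.symm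
  · convert (summable_hatSq_mul_sub h2s 0).hasSum using 3 with n
    · push_cast; ring
    · rfl
  · convert (summable_hatSq_mul_sub h2s s).hasSum using 3 with n
    · push_cast; ring
    · rfl

lemma g_eq_neg_add_Omega {x : ℝ} (hx : x ≠ 0) : g x = -(2 / 3) * x + Omega (1 / (2 * x)) 0 := by
  have h : 1 / x = 2 * (1 / (2 * x)) := by field_simp
  rw [g, h, add_assoc, Omega_two_mul_zero_add_Omega_two_mul (by positivity)]

lemma Omega_zero_eq_sum {s : ℝ} (hs : 0 < s) {N : ℕ} (hN : N * s ≤ 1) (hN' : 1 ≤ (N + 1) * s) :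
    Omega s 0 = 1 + 2 * ∑ k ∈ range N, (1 - (k + 1) * s) ^ 2 := by
  have heven : Function.Even fun n : ℤ => hatSq (n * s) := fun n => by
    simp only [Int.cast_neg, neg_mul, hatSq_neg]
  have hvanish : ∀ k ∉ range N, hatSq (((k + 1 : ℕ) : ℤ) * s) = 0 := fun k hk => by
    have : (N : ℝ) + 1 ≤ k + 1 := by simpa using hk
    refine hatSq_eq_zero ?_
    push_cast
    rw [abs_of_pos (by positivity)]
    nlinarith
  have hterm : ∀ k ∈ range N, hatSq (((k + 1 : ℕ) : ℤ) * s) = (1 - (k + 1) * s) ^ 2 :=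
    fun k hk => by
      have : (k : ℝ) + 1 ≤ N := by exact_mod_cast mem_range.1 hk
      push_cast
      exact hatSq_of_nonneg_of_le_one (by positivity) (by nlinarith)
  have hsum : Summable fun n : ℤ => hatSq (n * s) := by
    simpa using summable_hatSq_mul_sub hs.ne' 0
  simp only [Omega_eq_tsum_hatSq, sub_zero]
  rw [tsum_int_eq_zero_add_two_mul_tsum_pnat heven hsum,
    tsum_pnat_eq_tsum_succ (f := fun n : ℕ => hatSq ((n : ℤ) * s)), tsum_eq_sum hvanish,
    sum_congr rfl hterm]
  simp [hatSq]

lemma sum_range_one_sub_succ_mul_sq (s : ℝ) (N : ℕ) :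
    ∑ k ∈ range N, (1 - (k + 1) * s) ^ 2
      = N - N * (N + 1) * s + N * (N + 1) * (2 * N + 1) / 6 * s ^ 2 := by
  induction N with
  | zero => simp
  | succ n ih =>
    rw [sum_range_succ, ih]
    push_cast
    ring

lemma g_eq_of_le_of_le {x : ℝ} (hx : 0 < x) {N : ℕ} (hN : N ≤ 2 * x) (hN' : 2 * x ≤ N + 1) :
    g x = 1 - 2 / 3 * x + 2 * N - N * (N + 1) / x + N * (N + 1) * (2 * N + 1) / (12 * x ^ 2) := by
  have hs : 0 < 1 / (2 * x) := by positivity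
  rw [g_eq_neg_add_Omega hx.ne', Omega_zero_eq_sum hs (N := N), sum_range_one_sub_succ_mul_sq]
  · field_simp
    ring
  · rw [mul_one_div, div_le_one (by positivity)]; exact hN
  · rw [mul_one_div, le_div_iff₀ (by positivity)]; linarith

lemma g_of_le_half {x : ℝ} (hx : 0 < x) (hx' : x ≤ 1 / 2) : g x = 1 - 2 / 3 * x := by
  rw [g_eq_of_le_of_le hx (N := 0) (by norm_num; positivity) (by norm_num; linarith)]
  simp

lemma g_of_half_le_of_le_one {x : ℝ} (hx : 1 / 2 ≤ x) (hx' : x ≤ 1) :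
    g x = 3 - 2 / 3 * x - 2 / x + 1 / (2 * x ^ 2) := by
  rw [g_eq_of_le_of_le (by linarith) (N := 1) (by norm_num; linarith) (by norm_num; linarith)]
  field_simp
  ring

lemma two_thirds_lt_g {x : ℝ} (hx : 1 < x) : 2 / 3 < g x := by
  set N := ⌊2 * x⌋₊
  have hN : (N : ℝ) ≤ 2 * x := Nat.floor_le (by positivity)
  have hN' : 2 * x < N + 1 := Nat.lt_floor_add_one _
  have hN2 : (2 : ℝ) ≤ N := by exact_mod_cast Nat.le_floor (by push_cast; linarith)
  set θ := 2 * x - N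
  have hcubic : 0 < (N : ℝ) * (N - 1) ^ 2 + N * θ * (3 * N - 4) + θ ^ 2 * (3 * N + 1 - θ) := by
    have hθ : 0 ≤ θ := by linarith
    have h1 : 0 < (N : ℝ) * (N - 1) ^ 2 := mul_pos (by linarith) (by nlinarith)
    have h2 : 0 ≤ N * θ * (3 * N - 4) := by
      apply mul_nonneg (by positivity); linarith
    have h3 : 0 ≤ θ ^ 2 * (3 * N + 1 - θ) := mul_nonneg (by positivity) (by linarith)
    linarith
  have hx0 : x ≠ 0 := by positivity
  have hdiff : 1 - 2 / 3 * x + 2 * N - N * (N + 1) / x + N * (N + 1) * (2 * N + 1) / (12 * x ^ 2)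
      - 2 / 3
      = (N * (N - 1) ^ 2 + N * θ * (3 * N - 4) + θ ^ 2 * (3 * N + 1 - θ)) / (12 * x ^ 2) := by
    field_simp
    ring
  rw [g_eq_of_le_of_le (by linarith) hN hN'.le, ← sub_pos, hdiff]
  positivity

lemma g_of_cubic_eq_zero {Λ : ℝ} (hΛ : 2 * Λ ^ 3 - 6 * Λ + 3 = 0) (hΛ1 : 1 / 2 ≤ Λ) (hΛ2 : Λ ≤ 1) :
    g Λ = (6 * Λ ^ 2 - 8 * Λ + 3) / (2 * Λ ^ 2) := by
  have : Λ ≠ 0 := by positivity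
  rw [g_of_half_le_of_le_one hΛ1 hΛ2]
  field_simp
  linear_combination (-2) * hΛ

lemma four_mul_sq_lt_three_of_cubic_eq_zero {Λ : ℝ} (hΛ : 2 * Λ ^ 3 - 6 * Λ + 3 = 0)
    (hΛ0 : 0 ≤ Λ) (hΛ1 : Λ ≤ 1) : 4 * Λ ^ 2 < 3 := by
  nlinarith [mul_nonneg hΛ0 (sub_nonneg.2 hΛ1)]

lemma g_lt_g_of_cubic_eq_zero {Λ x : ℝ} (hΛ : 2 * Λ ^ 3 - 6 * Λ + 3 = 0) (hΛ1 : 1 / 2 ≤ Λ)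
    (hΛ2 : Λ ≤ 1) (hx : 1 / 2 ≤ x) (hx' : x ≤ 1) (hne : x ≠ Λ) : g Λ < g x := by
  have hΛ0 : Λ ≠ 0 := by positivity
  have hx0 : x ≠ 0 := by positivity
  have hdiff : g x - g Λ = (x - Λ) ^ 2 * (3 - 4 * Λ ^ 2 * x) / (6 * x ^ 2 * Λ ^ 2) := by
    rw [g_of_half_le_of_le_one hx hx', g_of_cubic_eq_zero hΛ hΛ1 hΛ2]
    field_simp
    linear_combination (12 * x * Λ - 24 * x ^ 2) * hΛ
  have hsq : 4 * Λ ^ 2 < 3 := four_mul_sq_lt_three_of_cubic_eq_zero hΛ (by linarith) hΛ2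
  have hpos : 0 < (x - Λ) ^ 2 * (3 - 4 * Λ ^ 2 * x) / (6 * x ^ 2 * Λ ^ 2) :=
    div_pos (mul_pos (sq_pos_of_ne_zero (sub_ne_zero.2 hne)) (by nlinarith)) (by positivity)
  linarith

theorem stmt_11_general (Λ : ℝ) (hΛroot : 2 * Λ ^ 3 - 6 * Λ + 3 = 0)
    (hΛ1 : 1 / 2 < Λ) (hΛ2 : Λ < 1) :
    (∀ x : ℝ, 0 < x → x ≠ Λ → g Λ < g x) ∧
    6 * (g Λ) ^ 3 - 42 * (g Λ) ^ 2 + 54 * (g Λ) - 19 = 0 := by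
  have hmid : ∀ x, 1 / 2 ≤ x → x ≤ 1 → x ≠ Λ → g Λ < g x := fun x hx hx' hne =>
    g_lt_g_of_cubic_eq_zero hΛroot hΛ1.le hΛ2.le hx hx' hne
  have hhalf : g Λ < 2 / 3 := by
    have := hmid (1 / 2) le_rfl (by norm_num) hΛ1.ne
    rwa [g_of_le_half (by norm_num) le_rfl, show (1 : ℝ) - 2 / 3 * (1 / 2) = 2 / 3 by norm_num]
      at this
  refine ⟨fun x hx0 hne => ?_, ?_⟩
  · rcases le_or_gt x (1 / 2) with hx | hx
    · rw [g_of_le_half hx0 hx]; linarith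
    rcases le_or_gt x 1 with hx' | hx'
    · exact hmid x hx.le hx' hne
    · linarith [two_thirds_lt_g hx']
  · have : Λ ≠ 0 := by positivity
    rw [g_of_cubic_eq_zero hΛroot hΛ1.le hΛ2.le]
    field_simp
    linear_combination (-292 * Λ ^ 3 + 576 * Λ ^ 2 - 324 * Λ + 54) * hΛroot

/-- `g` achieves a unique global minimum (over `x > 0`) at `x = Λ`, the unique root of
`2X³ - 6X + 3` in `(1/2, 1)`, and the minimum value `g(Λ)` is a root of
`6X³ - 42X² + 54X - 19`. -/
theorem stmt_11 (Λ : ℝ) (hΛroot : 2 * Λ ^ 3 - 6 * Λ + 3 = 0)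
    (hΛ1 : 1 / 2 < Λ) (hΛ2 : Λ < 1)
    (huniq : ∀ y : ℝ, 1 / 2 < y → y < 1 → 2 * y ^ 3 - 6 * y + 3 = 0 → y = Λ) :
    (∀ x : ℝ, 0 < x → x ≠ Λ → g Λ < g x) ∧
    6 * (g Λ) ^ 3 - 42 * (g Λ) ^ 2 + 54 * (g Λ) - 19 = 0 :=
  stmt_11_general Λ hΛroot hΛ1 hΛ2
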